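/- Let m ≥ 1 and let r_1, ..., r_m be positive real numbers. Let L̂ be the Laplacian of the weighted path on m vertices with edge weights r_1, ..., r_{m-1} (for m = 1, L̂ is the 1×1 zero matrix), and let B_1 = L̂ + 2 r_m e_m e_mᵀ, where e_m is the m-th standard basis vector. Then det B_1 = 2 r_1 r_2 ⋯ r_m. -/

import Mathlib

/-!
With `U` the forward-difference matrix (`(U x)ᵢ = xᵢ - xᵢ₊₁`, reading `xₘ = 0`), the path
Laplacian factors as `Uᵀ diag(r₁, …, r_{m-1}, 0) U`. The last row of `U` is `eₘᵀ`, so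
`Uᵀ (eₘ eₘᵀ) U = eₘ eₘᵀ` and the perturbed matrix is `Uᵀ diag(r₁, …, r_{m-1}, 2 rₘ) U`.
As `U` is unitriangular, the determinant is `r₁ ⋯ r_{m-1} · 2 rₘ`.
-/

open Matrix

/-- The Laplacian of the weighted path on `n` vertices (1-based vertices `1,…,n`,
0-based `Fin n` indices) with edge weight `r j` between vertices `j` and `j+1`. -/
noncomputable def pathLaplacian (n : ℕ) (r : ℕ → ℝ) : Matrix (Fin n) (Fin n) ℝ :=
  Matrix.of fun j k =>
    if (j : ℕ) = (k : ℕ) then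
      (if (j : ℕ) = 0 then 0 else r (j : ℕ)) + (if (j : ℕ) = n - 1 then 0 else r ((j : ℕ) + 1))
    else if (j : ℕ) + 1 = (k : ℕ) then -r ((j : ℕ) + 1)
    else if (k : ℕ) + 1 = (j : ℕ) then -r ((k : ℕ) + 1)
    else 0

variable {R : Type*}

theorem Matrix.single_mul_of_row_eq_single {ι : Type*} [Fintype ι] [DecidableEq ι]
    [NonAssocSemiring R] {M : Matrix ι ι R} {i : ι} (hM : M i = Pi.single i 1) (c : R) :
    single i i c * M = single i i c := by
  ext a b
  by_cases ha : a = i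
  · subst ha
    rw [single_mul_apply_same, hM, single_apply, Pi.single_apply]
    simp [eq_comm]
  · rw [single_mul_apply_of_ne _ _ _ _ _ ha, single_apply_of_row_ne (Ne.symm ha)]

theorem Matrix.transpose_mul_single_mul_of_row_eq_single {ι : Type*} [Fintype ι]
    [DecidableEq ι] [CommSemiring R] {M : Matrix ι ι R} {i : ι} (hM : M i = Pi.single i 1)
    (c : R) : Mᵀ * single i i c * M = single i i c := by
  have hleft : Mᵀ * single i i c = single i i c := by
    rw [← transpose_transpose (Mᵀ * single i i c), transpose_mul, transpose_single,
      transpose_transpose, single_mul_of_row_eq_single hM, transpose_single]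
  rw [hleft, single_mul_of_row_eq_single hM]

def forwardDiff (R : Type*) [Ring R] (n : ℕ) : Matrix (Fin n) (Fin n) R :=
  of fun i j => if i = j then 1 else if (i : ℕ) + 1 = j then -1 else 0

section forwardDiff

variable [Ring R]

theorem forwardDiff_isUpperTriangular (n : ℕ) : (forwardDiff R n).IsUpperTriangular := by
  intro i j hij
  simp only [forwardDiff, of_apply]
  rw [if_neg (by rintro rfl; exact lt_irrefl _ hij), if_neg (by have : j < i := hij; omega)]

theorem forwardDiff_last (n : ℕ) :
    forwardDiff R (n + 1) (Fin.last n) = Pi.single (Fin.last n) 1 := by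
  ext j
  simp only [forwardDiff, of_apply, Pi.single_apply, eq_comm (a := Fin.last n)]
  split_ifs <;> first | rfl | (simp at *; omega)

theorem sum_forwardDiff_mul {n : ℕ} (f : Fin n → R) (j : Fin n) :
    ∑ i, forwardDiff R n i j * f i =
      f j - if h : (j : ℕ) = 0 then 0 else f ⟨j - 1, by omega⟩ := by
  have hsplit : ∀ i, forwardDiff R n i j * f i =
      (if i = j then f i else 0) - if (i : ℕ) + 1 = j then f i else 0 := by
    intro i
    simp only [forwardDiff, of_apply]
    split_ifs <;> first | omega | simp_all
  rw [Finset.sum_congr rfl fun i _ => hsplit i, Finset.sum_sub_distrib, Fintype.sum_ite_eq']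
  congr 1
  split_ifs with hj
  · exact Finset.sum_eq_zero fun i _ => if_neg (by omega)
  · rw [Finset.sum_eq_single ⟨j - 1, by omega⟩]
    · exact if_pos (by simp; omega)
    · exact fun i _ hi => if_neg fun h => hi (Fin.ext (by simp; omega))
    · simp

end forwardDiff

theorem det_forwardDiff [CommRing R] (n : ℕ) : (forwardDiff R n).det = 1 := by
  rw [det_of_isUpperTriangular (forwardDiff_isUpperTriangular n)]
  exact Finset.prod_eq_one fun i _ => if_pos rfl

theorem pathLaplacian_eq_transpose_mul_diagonal_mul (n : ℕ) (r : ℕ → ℝ) :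
    pathLaplacian n r = (forwardDiff ℝ n)ᵀ *
      diagonal (fun i : Fin n => if (i : ℕ) = n - 1 then 0 else r (i + 1)) * forwardDiff ℝ n := by
  ext j k
  rw [Matrix.mul_assoc, mul_apply]
  simp only [transpose_apply, diagonal_mul]
  rw [sum_forwardDiff_mul]
  simp only [pathLaplacian, forwardDiff, of_apply, Fin.ext_iff]
  split_ifs <;> first | omega | grind

theorem Fin.prod_univ_add_one_eq_prod_Icc {M : Type*} [CommMonoid M] (f : ℕ → M) (n : ℕ) :
    ∏ i : Fin n, f (i + 1) = ∏ i ∈ Finset.Icc 1 n, f i := by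
  rw [Fin.prod_univ_eq_prod_range (fun i => f (i + 1)), Finset.range_eq_Ico,
    Finset.prod_Ico_add']
  rfl

theorem pathLaplacian_add_single_last (n : ℕ) (r : ℕ → ℝ) (c : ℝ) :
    pathLaplacian (n + 1) r + single (Fin.last n) (Fin.last n) c =
      (forwardDiff ℝ (n + 1))ᵀ * diagonal (Fin.lastCases c fun i => r (i + 1)) *
        forwardDiff ℝ (n + 1) := by
  have hdiag : diagonal (fun i : Fin (n + 1) => if (i : ℕ) = n then 0 else r (i + 1)) +
      single (Fin.last n) (Fin.last n) c = diagonal (Fin.lastCases c fun i => r (i + 1)) := by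
    rw [← diagonal_single, diagonal_add]
    congr 1
    ext i
    cases i using Fin.lastCases with
    | last => simp
    | cast i => simp [i.isLt.ne]
  rw [pathLaplacian_eq_transpose_mul_diagonal_mul, Nat.add_sub_cancel,
    ← transpose_mul_single_mul_of_row_eq_single (forwardDiff_last n), ← add_mul, ← mul_add, hdiag]

/-- `det (L̂ + 2 rₘ eₘ eₘᵀ) = 2 r₁ r₂ ⋯ rₘ`, where `L̂` is the Laplacian of the
weighted path on `m` vertices with edge weights `r 1, …, r (m-1)`. -/
theorem det_perturbed_path_laplacian (m : ℕ) (hm : 1 ≤ m) (r : ℕ → ℝ) :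
    (pathLaplacian m r +
        (2 * r m) • Matrix.single (⟨m - 1, by omega⟩ : Fin m)
          (⟨m - 1, by omega⟩ : Fin m) (1 : ℝ)).det =
      2 * ∏ j ∈ Finset.Icc 1 m, r j := by
  obtain ⟨n, rfl⟩ : ∃ n, m = n + 1 := ⟨m - 1, by omega⟩
  have hlast : (⟨n + 1 - 1, by omega⟩ : Fin (n + 1)) = Fin.last n := Fin.ext (by simp)
  rw [hlast, smul_single, smul_eq_mul, mul_one, pathLaplacian_add_single_last, det_mul, det_mul,
    det_transpose, det_forwardDiff, det_diagonal, Fin.prod_univ_castSucc]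
  simp only [Fin.lastCases_last, Fin.lastCases_castSucc]
  rw [Fin.prod_univ_add_one_eq_prod_Icc, Finset.prod_Icc_succ_top (by omega)]
  ring
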